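/- arXiv:1708.09842 — 2 statements merged into one kernel-verified Lean document; each statement's English description precedes it below -/
import Mathlib

section
/- Given an edge (u,v) of a graph on n vertices with adjacency queries in O(1), one can test whether (u,v) is 1-simplicial and contained in a maximal k-clique in O(kn) time, by computing X = N(u) ∩ N(v), checking |X| = k−2, and verifying X ∪ {u,v} is a clique. -/
/-- Correctness of the 1-simplicial/k-clique test: (u,v) is 1-simplicial and lies in a
maximal clique of size k iff X := N(u) ∩ N(v) is a clique of size k - 2. -/
theorem stmt_6 {V : Type} [Fintype V] (G : SimpleGraph V) (u v : V) (h : G.Adj u v)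
    (k : ℕ) (hk : 2 ≤ k) :
    (G.IsClique (G.neighborSet u ∩ G.neighborSet v) ∧
        ∃ C : Set V, Maximal G.IsClique C ∧ u ∈ C ∧ v ∈ C ∧ C.ncard = k) ↔
      ((G.neighborSet u ∩ G.neighborSet v).ncard = k - 2 ∧
        G.IsClique (G.neighborSet u ∩ G.neighborSet v)) := by
  set X := G.neighborSet u ∩ G.neighborSet v with hXdef
  have huv : u ≠ v := h.ne
  have huX : u ∉ X := fun hu => G.irrefl hu.1
  have hvX : v ∉ X := fun hv => G.irrefl hv.2
  -- X ∪ {u,v} is a clique whenever X is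
  have hcl : G.IsClique X → G.IsClique (X ∪ {u, v}) := by
    intro hc a ha b hb hab
    rcases ha with ha | ha
    · rcases hb with hb | hb
      · exact hc ha hb hab
      · rcases hb with rfl | rfl
        · exact ha.1.symm
        · exact ha.2.symm
    · rcases ha with rfl | rfl
      · rcases hb with hb | hb
        · exact hb.1
        · rcases hb with rfl | rfl
          · exact absurd rfl hab
          · exact h
      · rcases hb with hb | hb
        · exact hb.2
        · rcases hb with rfl | rfl
          · exact h.symm
          · exact absurd rfl hab
  -- any clique containing u and v is contained in X ∪ {u,v}
  have hsub : ∀ D : Set V, G.IsClique D → u ∈ D → v ∈ D → D ⊆ X ∪ {u, v} := by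
    intro D hD hu hv w hw
    by_cases hwu : w = u
    · exact Or.inr (Or.inl hwu)
    by_cases hwv : w = v
    · exact Or.inr (Or.inr hwv)
    · exact Or.inl ⟨(hD hw hu hwu).symm, (hD hw hv hwv).symm⟩
  -- cardinality of X ∪ {u,v}
  have heq : X ∪ {u, v} = insert u (insert v X) := by
    ext w; simp [or_comm, or_assoc, Set.mem_insert_iff]
  have hcard : (X ∪ {u, v}).ncard = X.ncard + 2 := by
    rw [heq, Set.ncard_insert_of_notMem (by simp [huv, huX]) (Set.Finite.insert _ (Set.toFinite X)),
      Set.ncard_insert_of_notMem hvX (Set.toFinite X)]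
  constructor
  · rintro ⟨hXcl, C, hCmax, hu, hv, hC⟩
    refine ⟨?_, hXcl⟩
    have h1 : C ⊆ X ∪ {u, v} := hsub C hCmax.1 hu hv
    have h2 : X ∪ {u, v} ⊆ C := hCmax.2 (hcl hXcl) h1
    have : C = X ∪ {u, v} := le_antisymm h1 h2
    rw [this, hcard] at hC
    omega
  · rintro ⟨hXcard, hXcl⟩
    refine ⟨hXcl, X ∪ {u, v}, ⟨hcl hXcl, ?_⟩, Or.inr (Or.inl rfl), Or.inr (Or.inr rfl), ?_⟩
    · intro D hD hle
      exact hsub D hD (hle (Or.inr (Or.inl rfl))) (hle (Or.inr (Or.inr rfl)))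
    · rw [hcard, hXcard]; omega
end

section
/- In a histogram polygon with unit step lengths, a top (convex, non-base) vertex at level ℓ sees no vertex at a level strictly greater than ℓ. -/
/-- A top (convex) vertex v at level ℓ, near which the polygon lies below the line y = ℓ,
sees no vertex u at level strictly greater than ℓ. -/
theorem stmt_9 (P : Set (ℝ × ℝ)) (v u : ℝ × ℝ) (ℓ : ℝ) (hv : v ∈ P) (hvl : v.2 = ℓ)
    (hloc : ∃ ε > 0, ∀ q ∈ P, dist q v < ε → q.2 ≤ ℓ)
    (hu : u.2 > ℓ) :
    ¬ segment ℝ v u ⊆ P := by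
  obtain ⟨ε, hε, hloc⟩ := hloc
  intro hsub
  have hdv : (0:ℝ) < dist v u := by
    rw [dist_pos]
    intro h
    rw [← h, hvl] at hu
    exact lt_irrefl _ hu
  set t : ℝ := min 1 (ε / (2 * dist v u)) with ht
  have ht0 : 0 < t := lt_min one_pos (by positivity)
  have ht1 : t ≤ 1 := min_le_left _ _
  set q : ℝ × ℝ := (1 - t) • v + t • u with hq
  have hqseg : q ∈ segment ℝ v u :=
    ⟨1 - t, t, by linarith, le_of_lt ht0, by ring, rfl⟩
  have hqP : q ∈ P := hsub hqseg
  have hdist : dist q v < ε := by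
    have : dist q v = t * dist v u := by
      rw [hq, dist_eq_norm]
      have : (1 - t) • v + t • u - v = t • (u - v) := by
        simp [smul_sub, sub_smul]; abel
      rw [this, norm_smul, Real.norm_eq_abs, abs_of_pos ht0, dist_eq_norm, norm_sub_rev]
    rw [this]
    have h2 : t ≤ ε / (2 * dist v u) := min_le_right _ _
    have : t * dist v u ≤ ε / 2 := by
      rw [div_mul_eq_div_div] at h2
      calc t * dist v u ≤ (ε / 2 / dist v u) * dist v u :=
        mul_le_mul_of_nonneg_right h2 (le_of_lt hdv)
      _ = ε / 2 := by field_simp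
    linarith
  have hle := hloc q hqP hdist
  have hq2 : q.2 = (1 - t) * v.2 + t * u.2 := rfl
  rw [hq2, hvl] at hle
  nlinarith
end
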